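/- arXiv:2106.04380 — 5 statements merged into one kernel-verified Lean document; each statement's English description precedes it below -/
import Mathlib

section
/- Let U be an associative unital ring and I a left ideal of U. Suppose that to every left U-module V there is assigned an additive map P_V : V → V such that: (naturality) for every U-linear map f : V → W one has f ∘ P_V = P_W ∘ f; (i) P_V(v) = v for every v ∈ V with a•v = 0 for all a ∈ I; (ii) a•P_V(v) = 0 for every v ∈ V and every a ∈ I. Then U/I is a projective left U-module. -/
universe u

/-- If to every left `U`-module `V` there is assigned an additive map `P_V : V → V`,
natural in `V`, fixing the `I`-invariants and with image annihilated by `I`,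
then `U/I` is a projective left `U`-module. -/
theorem statement2 (U : Type u) [Ring U] (I : Ideal U)
    (P : ∀ (V : Type u) [AddCommGroup V] [Module U V], V →+ V)
    (hnat : ∀ (V : Type u) [AddCommGroup V] [Module U V]
      (W : Type u) [AddCommGroup W] [Module U W] (f : V →ₗ[U] W) (v : V),
        f (P V v) = P W (f v))
    (hfix : ∀ (V : Type u) [AddCommGroup V] [Module U V] (v : V),
      (∀ a ∈ I, a • v = 0) → P V v = v)
    (hann : ∀ (V : Type u) [AddCommGroup V] [Module U V] (v : V),
      ∀ a ∈ I, a • P V v = 0) :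
    Module.Projective U (U ⧸ I) := by
  rw [Module.projective_def]
  set A := ((U ⧸ I) →₀ U) with hA
  let t : A →ₗ[U] U ⧸ I := Finsupp.linearCombination U id
  let e : A := P A (Finsupp.single (Submodule.Quotient.mk 1) 1)
  have he : ∀ a ∈ I, a • e = 0 := hann A _
  let g : U →ₗ[U] A := LinearMap.toSpanSingleton U A e
  have hg : I ≤ LinearMap.ker g := fun a ha => by
    simp [g, LinearMap.mem_ker, LinearMap.toSpanSingleton_apply, he a ha]
  refine ⟨Submodule.liftQ I g hg, ?_⟩
  have hte : t e = Submodule.Quotient.mk 1 := by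
    have h1 : t (Finsupp.single (Submodule.Quotient.mk 1) 1) =
        (Submodule.Quotient.mk 1 : U ⧸ I) := by
      rw [show t = Finsupp.linearCombination U id from rfl, Finsupp.linearCombination_single, one_smul]; rfl
    have := hnat A (U ⧸ I) t (Finsupp.single (Submodule.Quotient.mk 1) 1)
    rw [h1] at this
    rw [show t e = P (U ⧸ I) (Submodule.Quotient.mk 1) from this]
    apply hfix
    intro a ha
    rw [← Submodule.Quotient.mk_smul, smul_eq_mul, mul_one]
    exact (Submodule.Quotient.mk_eq_zero I).2 ha
  intro x
  induction x using Submodule.Quotient.induction_on with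
  | _ u =>
    have : Submodule.liftQ I g hg (Submodule.Quotient.mk u) = u • e := by
      simp [g, Submodule.liftQ_apply, LinearMap.toSpanSingleton_apply]
    rw [this]
    show t (u • e) = _
    rw [map_smul, hte, ← Submodule.Quotient.mk_smul, smul_eq_mul, mul_one]
end

section
/- Let U be an associative unital ring and I a left ideal of U such that U/I is a projective left U-module. Let V be a left U-module and v ∈ V an element with a•v = 0 for all a ∈ I, which generates V as a U-module (U•v = V). Then for every w ∈ V with a•w = 0 for all a ∈ I, there exists n ∈ U satisfying a*n ∈ I for all a ∈ I (i.e. n lies in the idealizer N of I) such that w = n•v. Equivalently, v generates V⁺ = {v' ∈ V : I•v' = 0} as a module over the eigenring Z = N/I. -/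
/-- If `U/I` is projective, `v ∈ V` is annihilated by `I` and generates `V` as a `U`-module,
then every `w ∈ V` annihilated by `I` is of the form `n • v` for some `n` in the idealizer
of `I`; i.e. `v` generates `V⁺` as a module over the eigenring `Z = N/I`. -/
theorem statement3 (U : Type*) [Ring U] (I : Ideal U)
    (hproj : Module.Projective U (U ⧸ I))
    (V : Type*) [AddCommGroup V] [Module U V]
    (v : V) (hv : ∀ a ∈ I, a • v = 0)
    (hgen : ∀ w : V, ∃ u : U, u • v = w) :
    ∀ w : V, (∀ a ∈ I, a • w = 0) →
      ∃ n : U, (∀ a ∈ I, a * n ∈ I) ∧ n • v = w := by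
  intro w hw
  -- p : U → V, u ↦ u • v, surjective
  set p := LinearMap.toSpanSingleton U V v with hp
  have hpsurj : Function.Surjective p := by
    intro x
    obtain ⟨u, hu⟩ := hgen x
    exact ⟨u, hu⟩
  -- f : U ⧸ I → V, u + I ↦ u • w
  have hker : I ≤ LinearMap.ker (LinearMap.toSpanSingleton U V w) := by
    intro a ha
    simpa [LinearMap.toSpanSingleton] using hw a ha
  set f := I.liftQ (LinearMap.toSpanSingleton U V w) hker with hf
  obtain ⟨g, hg⟩ := Module.projective_lifting_property p f hpsurj
  refine ⟨g (Submodule.Quotient.mk 1), ?_, ?_⟩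
  · intro a ha
    have h1 : a • g (Submodule.Quotient.mk (1 : U)) = g (a • Submodule.Quotient.mk (1 : U)) :=
      (g.map_smul a _).symm
    have h2 : a • (Submodule.Quotient.mk (1 : U) : U ⧸ I) = 0 := by
      rw [← Submodule.Quotient.mk_smul, smul_eq_mul, mul_one]
      exact (Submodule.Quotient.mk_eq_zero I).mpr ha
    have : a * g (Submodule.Quotient.mk (1 : U)) = 0 := by
      rw [← smul_eq_mul, h1, h2, map_zero]
    rw [this]; exact I.zero_mem
  · have := congrArg (fun h => h (Submodule.Quotient.mk (1 : U))) hg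
    simp only [LinearMap.comp_apply] at this
    have hfval : f (Submodule.Quotient.mk (1 : U)) = w := by
      simp [hf, Submodule.liftQ_apply, LinearMap.toSpanSingleton_apply]
    rw [hfval] at this
    simpa [hp, LinearMap.toSpanSingleton_apply] using this
end

section
/- Let U be an associative unital ring and I a left ideal of U such that U/I is a projective left U-module. Let V be a simple left U-module. Then for every nonzero v ∈ V with a•v = 0 for all a ∈ I, and every w ∈ V with a•w = 0 for all a ∈ I, there exists n ∈ U satisfying a*n ∈ I for all a ∈ I such that w = n•v. In other words, if V⁺ = {v ∈ V : I•v = 0} is nonzero, then V⁺ is a simple module over the eigenring Z = N/I. -/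
/-- If `U/I` is projective and `V` is a simple left `U`-module, then for every nonzero
`v ∈ V` annihilated by `I` and every `w ∈ V` annihilated by `I` there is an element `n`
of the idealizer of `I` with `w = n • v`; i.e. if `V⁺ ≠ 0` then `V⁺` is a simple module
over the eigenring `Z = N/I`. -/
theorem statement4 (U : Type*) [Ring U] (I : Ideal U)
    (hproj : Module.Projective U (U ⧸ I))
    (V : Type*) [AddCommGroup V] [Module U V] [IsSimpleModule U V] :
    ∀ v : V, v ≠ 0 → (∀ a ∈ I, a • v = 0) →
      ∀ w : V, (∀ a ∈ I, a • w = 0) →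
        ∃ n : U, (∀ a ∈ I, a * n ∈ I) ∧ n • v = w := by
  intro v hv hIv w hIw
  -- π : U ⧸ I → V, mk u ↦ u • v
  have hkerv : I ≤ LinearMap.ker (LinearMap.toSpanSingleton U V v) := by
    intro a ha
    simpa using hIv a ha
  have hkerw : I ≤ LinearMap.ker (LinearMap.toSpanSingleton U V w) := by
    intro a ha
    simpa using hIw a ha
  set π := I.liftQ (LinearMap.toSpanSingleton U V v) hkerv with hπ
  set f := I.liftQ (LinearMap.toSpanSingleton U V w) hkerw with hf
  have hπone : π (Submodule.Quotient.mk 1) = v := by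
    simp [hπ]
  have hπsurj : Function.Surjective π := by
    have : LinearMap.range π = ⊤ := by
      rcases eq_bot_or_eq_top (LinearMap.range π) with h | h
      · exfalso
        apply hv
        have : v ∈ LinearMap.range π := ⟨Submodule.Quotient.mk 1, hπone⟩
        rw [h] at this
        simpa using this
      · exact h
    exact LinearMap.range_eq_top.mp this
  obtain ⟨h, hh⟩ := Module.projective_lifting_property π f hπsurj
  obtain ⟨n, hn⟩ := Submodule.Quotient.mk_surjective I (h (Submodule.Quotient.mk 1))
  refine ⟨n, ?_, ?_⟩
  · intro a ha
    have h0 : a • (Submodule.Quotient.mk (1 : U) : U ⧸ I) = Submodule.Quotient.mk a := by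
      rw [← Submodule.Quotient.mk_smul]; simp
    have : (Submodule.Quotient.mk (a * n) : U ⧸ I) = 0 := by
      calc (Submodule.Quotient.mk (a * n) : U ⧸ I)
          = a • Submodule.Quotient.mk n := by rw [← Submodule.Quotient.mk_smul]; rfl
        _ = a • h (Submodule.Quotient.mk 1) := by rw [hn]
        _ = h (a • Submodule.Quotient.mk 1) := (h.map_smul a _).symm
        _ = h (Submodule.Quotient.mk a) := by rw [h0]
        _ = 0 := by
            rw [show (Submodule.Quotient.mk a : U ⧸ I) = 0 from
              (Submodule.Quotient.mk_eq_zero I).mpr ha, map_zero]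
    exact (Submodule.Quotient.mk_eq_zero I).mp this
  · have : π (Submodule.Quotient.mk n) = f (Submodule.Quotient.mk 1) := by
      rw [hn, ← LinearMap.comp_apply, hh]
    simpa [hπ, hf] using this
end

section
/- Let k be a commutative ring, C a category, and F, G, H : C ⥤ ModuleCat k functors. Let ι : G ⟶ F be a natural transformation all of whose components are injective, and π : F ⟶ H a natural transformation all of whose components are surjective. Let Q : G ⟶ H be the natural transformation with components Q_V = π_V ∘ ι_V. Then Q is a natural isomorphism if and only if there exists a natural transformation P : F ⟶ F such that for every object V of C: (i) P_V ∘ ι_V = ι_V; (ii) π_V ∘ P_V = π_V; (iii) the range of P_V is contained in the range of ι_V; (iv) the kernel of π_V is contained in the kernel of P_V. Furthermore, if these hold then P_V ∘ P_V = P_V for every object V. -/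
/-!
If `Q = ι ≫ π` is invertible, `π ≫ Q⁻¹ ≫ ι` is the required projector. Conversely, at each
object `P ∘ ι = ι` together with `ker π ⊆ ker P` makes `π ∘ ι` injective, and `π ∘ P = π`
together with `range P ⊆ range ι` makes it surjective; a natural transformation with
bijective components is a natural isomorphism.
-/

open CategoryTheory

namespace CategoryTheory

variable {D : Type*} [Category D] {X Y Z : D} (ι : Y ⟶ X) (π : X ⟶ Z) [IsIso (ι ≫ π)]

noncomputable def extremalProjector : X ⟶ X := π ≫ inv (ι ≫ π) ≫ ι

theorem comp_extremalProjector : ι ≫ extremalProjector ι π = ι := by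
  rw [extremalProjector, ← Category.assoc, IsIso.hom_inv_id_assoc]

theorem extremalProjector_comp : extremalProjector ι π ≫ π = π := by
  simp [extremalProjector]

end CategoryTheory

namespace ModuleCat

variable {R : Type*} [Ring R] {A B D : ModuleCat R} {i : A ⟶ B} {p : B ⟶ D} {P : B ⟶ B}

theorem comp_self_eq_of_comp_eq_of_range_le (hPi : i ≫ P = i)
    (hrange : LinearMap.range P.hom ≤ LinearMap.range i.hom) : P ≫ P = P := by
  ext x
  obtain ⟨y, hy⟩ := hrange ⟨x, rfl⟩
  change P (P x) = P x
  rw [← hy]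
  exact congr($hPi y)

theorem injective_comp_of_comp_eq_of_ker_le (hi : Function.Injective i) (hPi : i ≫ P = i)
    (hker : LinearMap.ker p.hom ≤ LinearMap.ker P.hom) : Function.Injective (i ≫ p) := by
  refine (injective_iff_map_eq_zero (i ≫ p).hom).2 fun x hx => hi ?_
  have hPx : P (i x) = 0 := hker hx
  rw [map_zero, ← hPx]
  exact congr($hPi x).symm

theorem surjective_comp_of_comp_eq_of_range_le (hp : Function.Surjective p) (hPp : P ≫ p = p)
    (hrange : LinearMap.range P.hom ≤ LinearMap.range i.hom) : Function.Surjective (i ≫ p) := by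
  intro z
  obtain ⟨x, rfl⟩ := hp z
  obtain ⟨y, hy⟩ := hrange ⟨x, rfl⟩
  refine ⟨y, ?_⟩
  change p (i y) = p x
  rw [hy]
  exact congr($hPp x)

end ModuleCat

section

variable {k : Type*} [Ring k] {C : Type*} [Category C] {F G H : C ⥤ ModuleCat k}
  (ι : G ⟶ F) (π : F ⟶ H) [IsIso (ι ≫ π)]

theorem range_extremalProjector_app_le (V : C) :
    LinearMap.range ((extremalProjector ι π).app V).hom ≤ LinearMap.range (ι.app V).hom := by
  rw [extremalProjector, ← Category.assoc, NatTrans.comp_app, ModuleCat.hom_comp]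
  exact LinearMap.range_comp_le_range _ _

theorem ker_le_ker_extremalProjector_app (V : C) :
    LinearMap.ker (π.app V).hom ≤ LinearMap.ker ((extremalProjector ι π).app V).hom := by
  rw [extremalProjector, NatTrans.comp_app, ModuleCat.hom_comp]
  exact LinearMap.ker_le_ker_comp _ _

end

/-- Functorial characterization of extremal projectors: given functors `F G H : C ⥤ Mod_k`,
`ι : G ⟶ F` with injective components and `π : F ⟶ H` with surjective components,
the natural transformation `Q = π ∘ ι : G ⟶ H` is a natural isomorphism iff there is a
natural transformation `P : F ⟶ F` with `P ∘ ι = ι`, `π ∘ P = π`, `range P_V ⊆ range ι_V`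
and `ker π_V ⊆ ker P_V` at every object `V`; furthermore any such `P` is idempotent. -/
theorem statement7 (k : Type*) [CommRing k] (C : Type*) [Category C]
    (F G H : C ⥤ ModuleCat k) (ι : G ⟶ F) (π : F ⟶ H)
    (hι : ∀ V : C, Function.Injective (ι.app V))
    (hπ : ∀ V : C, Function.Surjective (π.app V)) :
    (IsIso (ι ≫ π) ↔
      ∃ P : F ⟶ F, ∀ V : C,
        ι.app V ≫ P.app V = ι.app V ∧
        P.app V ≫ π.app V = π.app V ∧
        LinearMap.range (P.app V).hom ≤ LinearMap.range (ι.app V).hom ∧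
        LinearMap.ker (π.app V).hom ≤ LinearMap.ker (P.app V).hom) ∧
    (∀ P : F ⟶ F,
      (∀ V : C,
        ι.app V ≫ P.app V = ι.app V ∧
        P.app V ≫ π.app V = π.app V ∧
        LinearMap.range (P.app V).hom ≤ LinearMap.range (ι.app V).hom ∧
        LinearMap.ker (π.app V).hom ≤ LinearMap.ker (P.app V).hom) →
      ∀ V : C, P.app V ≫ P.app V = P.app V) := by
  refine ⟨⟨fun _ => ⟨extremalProjector ι π, fun V => ⟨?_, ?_, ?_, ?_⟩⟩, fun ⟨P, hP⟩ => ?_⟩,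
    fun P hP V => ModuleCat.comp_self_eq_of_comp_eq_of_range_le (hP V).1 (hP V).2.2.1⟩
  · rw [← NatTrans.comp_app, comp_extremalProjector]
  · rw [← NatTrans.comp_app, extremalProjector_comp]
  · exact range_extremalProjector_app_le ι π V
  · exact ker_le_ker_extremalProjector_app ι π V
  · have (V : C) : IsIso ((ι ≫ π).app V) := by
      obtain ⟨hPι, hPπ, hrange, hker⟩ := hP V
      exact (ConcreteCategory.isIso_iff_bijective _).2
        ⟨ModuleCat.injective_comp_of_comp_eq_of_ker_le (hι V) hPι hker,
          ModuleCat.surjective_comp_of_comp_eq_of_range_le (hπ V) hPπ hrange⟩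
    exact NatIso.isIso_of_isIso_app _
end

section
/- Let U be an associative unital ring, I a left ideal of U, N = {x ∈ U : a*x ∈ I for all a ∈ I} its idealizer, and M = U/I. For n ∈ N the right action (u + I)·n := u*n + I on M is well defined. Let M⁺ = {m ∈ M : a•m = 0 for all a ∈ I}, which equals the image of N in M and carries the ring multiplication (n + I)*(n' + I) = n*n' + I. Let T be an additive subgroup of M with T·n ⊆ T for all n ∈ N, and let p : M → M/T be the quotient map. Assume that the restriction Q of p to M⁺ is a bijection from M⁺ onto M/T, with inverse P : M/T → M⁺. Define a product on M/T by x ◊ y := Q(P(x)*P(y)). Then for all x, y ∈ M/T: if m ∈ M is any element with p(m) = x and n ∈ N is any element with n + I = P(y), then x ◊ y = p(m·n). That is, x ◊ y equals the image in M/T of the right action of P(y) on x. -/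
/-- Let `I` be a left ideal of `U`, `N` its idealizer, `M = U/I`,
`M⁺ = {m ∈ M : I • m = 0}` (which equals the image of `N` in `M`), and `T` an additive
subgroup of `M` stable under the right `N`-action `(u + I) · n = u*n + I` (which is well
defined).  If the restriction `Q` of the quotient map `p : M → M/T` to `M⁺` is a bijection
with inverse `P`, then the product `x ◊ y := Q(P(x) * P(y))` on `M/T` (where the
multiplication on `M⁺` is `(n + I)*(n' + I) = n*n' + I`) satisfies: `x ◊ y` is the image
in `M/T` of the right action of `P(y)` on `x`, i.e. `x ◊ y = p(m · n)` whenever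
`p(m) = x` and `n ∈ N` represents `P(y)`. -/
theorem statement8 (U : Type*) [Ring U] (I : Ideal U)
    (T : AddSubgroup (U ⧸ I))
    (hT : ∀ n : U, (∀ a ∈ I, a * n ∈ I) →
      ∀ u : U, (Submodule.Quotient.mk u : U ⧸ I) ∈ T →
        (Submodule.Quotient.mk (u * n) : U ⧸ I) ∈ T)
    (P : ((U ⧸ I) ⧸ T) → U ⧸ I)
    (hPmem : ∀ x : (U ⧸ I) ⧸ T, ∀ a ∈ I, a • P x = 0)
    (hQP : ∀ x : (U ⧸ I) ⧸ T, (QuotientAddGroup.mk (P x) : (U ⧸ I) ⧸ T) = x)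
    (hPQ : ∀ m : U ⧸ I, (∀ a ∈ I, a • m = 0) → P (QuotientAddGroup.mk m) = m) :
    -- the right action of the idealizer on `M = U/I` is well defined
    (∀ n : U, (∀ a ∈ I, a * n ∈ I) →
      ∀ u u' : U, (Submodule.Quotient.mk u : U ⧸ I) = Submodule.Quotient.mk u' →
        (Submodule.Quotient.mk (u * n) : U ⧸ I) = Submodule.Quotient.mk (u' * n)) ∧
    -- `M⁺` is the image of the idealizer `N` in `M`
    (∀ m : U ⧸ I, (∀ a ∈ I, a • m = 0) ↔
      ∃ n : U, (∀ a ∈ I, a * n ∈ I) ∧ (Submodule.Quotient.mk n : U ⧸ I) = m) ∧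
    -- the diamond product `x ◊ y = Q(P(x)*P(y))` equals `p(m · P(y))`
    (∀ x y : (U ⧸ I) ⧸ T, ∀ m : U ⧸ I, (QuotientAddGroup.mk m : (U ⧸ I) ⧸ T) = x →
      ∀ n : U, (∀ a ∈ I, a * n ∈ I) → (Submodule.Quotient.mk n : U ⧸ I) = P y →
      ∀ n₀ : U, (∀ a ∈ I, a * n₀ ∈ I) → (Submodule.Quotient.mk n₀ : U ⧸ I) = P x →
      ∀ u : U, (Submodule.Quotient.mk u : U ⧸ I) = m →
      (QuotientAddGroup.mk (Submodule.Quotient.mk (n₀ * n) : U ⧸ I) : (U ⧸ I) ⧸ T) =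
        QuotientAddGroup.mk (Submodule.Quotient.mk (u * n) : U ⧸ I)) := by
  refine ⟨?_, ?_, ?_⟩
  · intro n hn u u' huu'
    rw [Submodule.Quotient.eq] at huu' ⊢
    simpa [sub_mul] using hn _ huu'
  · intro m
    constructor
    · intro hm
      obtain ⟨u, rfl⟩ := Submodule.Quotient.mk_surjective I m
      refine ⟨u, fun a ha => ?_, rfl⟩
      have h0 : (Submodule.Quotient.mk (a * u) : U ⧸ I) = 0 := by
        have := hm a ha
        rwa [← Submodule.Quotient.mk_smul, smul_eq_mul] at this
      exact (Submodule.Quotient.mk_eq_zero I).mp h0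
    · rintro ⟨n, hn, rfl⟩ a ha
      rw [← Submodule.Quotient.mk_smul, smul_eq_mul]
      exact (Submodule.Quotient.mk_eq_zero I).mpr (hn a ha)
  · intro x y m hmx n hn hnPy n₀ hn₀ hn₀Px u hu
    have hdiff : (Submodule.Quotient.mk (u - n₀) : U ⧸ I) ∈ T := by
      have h1 : (QuotientAddGroup.mk (Submodule.Quotient.mk n₀ : U ⧸ I) : (U ⧸ I) ⧸ T)
          = QuotientAddGroup.mk (Submodule.Quotient.mk u) := by
        rw [hu, hmx, hn₀Px, hQP]
      rw [QuotientAddGroup.eq] at h1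
      simpa [Submodule.Quotient.mk_sub, neg_add_eq_sub] using h1
    have h2 := hT n hn (u - n₀) hdiff
    rw [QuotientAddGroup.eq]
    simpa [sub_mul, Submodule.Quotient.mk_sub, neg_add_eq_sub] using h2
end
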